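/- Let d ≥ 1 and let a_1,…,a_d and b_1,…,b_d be elements of a commutative ring. Then the ordered product of the 2×2 lower triangular matrices [[a_k, 0],[b_k, a_k]], k = 1,…,d, equals [[Π_{k=1}^d a_k, 0],[Σ_{k=1}^d b_k · Π_{l≠k} a_l, Π_{k=1}^d a_k]]. In particular, taking a_k = δ(i_k,j_k) and b_k = D(i_k,j_k), the (2,1) entry of the product of cores [[δ(i_k,j_k),0],[D(i_k,j_k),δ(i_k,j_k)]] equals the entry Δ_d(i,j) = Σ_k D(i_k,j_k)Π_{l≠k}δ(i_l,j_l) of the Kronecker sum, so the Kronecker-sum matrix Δ_d admits an exact tensor train (matrix TT) representation with all TT-ranks at most 2. -/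
import Mathlib


open Matrix BigOperators Finset

private lemma erase_zero_prod {R : Type*} [CommRing R] {d : ℕ} (a : Fin (d + 1) → R) :
    ∏ l ∈ (Finset.univ.erase (0 : Fin (d + 1))), a l = ∏ k : Fin d, a k.succ := by
  rw [Fin.univ_succ, Finset.erase_cons, Finset.prod_map]
  rfl

private lemma erase_succ_prod {R : Type*} [CommRing R] {d : ℕ} (a : Fin (d + 1) → R)
    (k : Fin d) :
    ∏ l ∈ (Finset.univ.erase (Fin.succ k)), a l
      = a 0 * ∏ l ∈ Finset.univ.erase k, a l.succ := by
  have hm : ((Finset.univ.erase k).map ⟨Fin.succ, Fin.succ_injective _⟩)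
      = (Finset.univ.map ⟨Fin.succ, Fin.succ_injective _⟩).erase k.succ :=
    Finset.map_erase _ _ _
  rw [Fin.univ_succ, Finset.erase_cons_of_ne _ (Fin.succ_ne_zero k).symm, Finset.prod_cons,
    ← hm, Finset.prod_map]
  rfl

private lemma tt_prod {R : Type*} [CommRing R] : ∀ (d : ℕ) (a b : Fin d → R),
    (List.ofFn (fun k : Fin d => !![a k, 0; b k, a k])).prod =
      !![∏ k : Fin d, a k, 0;
         ∑ k : Fin d, b k * ∏ l ∈ Finset.univ.erase k, a l, ∏ k : Fin d, a k] := by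
  intro d
  induction d with
  | zero =>
    intro a b
    simp [List.ofFn_zero, Matrix.one_fin_two]
  | succ d ih =>
    intro a b
    rw [List.ofFn_succ, List.prod_cons, ih (fun k => a k.succ) (fun k => b k.succ)]
    have h0 : ∏ l ∈ (Finset.univ.erase (0 : Fin (d + 1))), a l = ∏ k : Fin d, a k.succ :=
      erase_zero_prod a
    rw [Fin.prod_univ_succ, Fin.sum_univ_succ, h0]
    have hsum : ∑ k : Fin d, b k.succ * ∏ l ∈ Finset.univ.erase (Fin.succ k), a l
        = a 0 * ∑ k : Fin d, b k.succ * ∏ l ∈ Finset.univ.erase k, a l.succ := by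
      rw [Finset.mul_sum]
      refine Finset.sum_congr rfl fun k _ => ?_
      rw [erase_succ_prod a k]; ring
    rw [hsum]
    ext x y
    fin_cases x <;> fin_cases y <;>
      simp [Matrix.mul_apply, Fin.sum_univ_two] <;> ring

/-- The ordered product of the 2×2 lower-triangular matrices
[[a_k, 0],[b_k, a_k]], k = 1,…,d, equals
[[Π_k a_k, 0],[Σ_k b_k·Π_{l≠k} a_l, Π_k a_k]].
In particular, with a_k = δ(i_k,j_k) and b_k = D(i_k,j_k), the (2,1)-entry
of the product of the TT cores equals the entry
Δ_d(i,j) = Σ_k D(i_k,j_k)·Π_{l≠k} δ(i_l,j_l) of the Kronecker sum, so the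
Kronecker-sum matrix admits an exact matrix-TT representation with all
TT-ranks at most 2. -/
theorem kronecker_sum_tt_rank_two
    (R : Type*) [CommRing R] (d : ℕ) (hd : 1 ≤ d)
    (a b : Fin d → R) :
    (List.ofFn (fun k : Fin d => !![a k, 0; b k, a k])).prod =
      !![∏ k : Fin d, a k, 0;
         ∑ k : Fin d, b k * ∏ l ∈ Finset.univ.erase k, a l, ∏ k : Fin d, a k] ∧
    (∀ (n : ℕ) (D : Matrix (Fin n) (Fin n) R) (i j : Fin d → Fin n),
      (List.ofFn (fun k : Fin d =>
        !![if i k = j k then (1 : R) else 0, 0;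
           D (i k) (j k), if i k = j k then (1 : R) else 0])).prod 1 0 =
      ∑ k : Fin d, D (i k) (j k) *
        ∏ l ∈ Finset.univ.erase k, (if i l = j l then (1 : R) else 0)) := by
  refine ⟨tt_prod d a b, fun n D i j => ?_⟩
  rw [tt_prod d (fun k => if i k = j k then (1 : R) else 0) (fun k => D (i k) (j k))]
  simp
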